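/- For distinct elements a, b of a field and a third distinct element c, the sum over all shuffles of the two-element list (a,b) with the one-element list (c) of the cell function ∏_{i≥2} 1/(w_i - w_{i-1}) telescopes to zero; more generally, summing the cell function over shuffles of any list A with a single letter c gives zero. -/
import Mathlib


/-- The cell function of a list `W = (w₁, …, w_m)` of elements of a field:
`f(W) = ∏_{i=2}^m 1/(w_i - w_{i-1})`. -/
def cellFun {K : Type*} [Field K] (W : List K) : K :=
  ((W.zip W.tail).map (fun p => (p.2 - p.1)⁻¹)).prod

lemma cellFun_cons_cons {K : Type*} [Field K] (a b : K) (W : List K) :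
    cellFun (a :: b :: W) = (b - a)⁻¹ * cellFun (b :: W) := by
  simp [cellFun]

lemma shuffle_tail_sum {K : Type*} [Field K] :
    ∀ (B : List K) (a c : K), (c :: a :: B).Nodup →
      ∑ k ∈ Finset.range (B.length + 1), cellFun ((a :: B).insertIdx (k + 1) c)
        = (c - a)⁻¹ * cellFun (a :: B) := by
  intro B
  induction B with
  | nil =>
      intro a c h
      simp [cellFun, List.insertIdx_succ_cons, List.insertIdx_zero]
  | cons b B ih =>
      intro a c h
      have hnd : (c :: b :: B).Nodup := by
        simp only [List.nodup_cons, List.mem_cons] at h ⊢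
        tauto
      have hca : c ≠ a := by simp at h; tauto
      have hcb : c ≠ b := by simp at h; tauto
      have hab : a ≠ b := by simp at h; tauto
      have key : ∑ k ∈ Finset.range ((b :: B).length + 1),
          cellFun ((a :: b :: B).insertIdx (k + 1) c)
          = (c - a)⁻¹ * cellFun (c :: b :: B)
            + (b - a)⁻¹ * ∑ k ∈ Finset.range (B.length + 1),
                cellFun ((b :: B).insertIdx (k + 1) c) := by
        simp only [List.length_cons]
        rw [Finset.sum_range_succ' (fun k => cellFun ((a :: b :: B).insertIdx (k + 1) c))]
        have e1 : ∀ k, cellFun ((a :: b :: B).insertIdx (k + 1 + 1) c)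
            = (b - a)⁻¹ * cellFun ((b :: B).insertIdx (k + 1) c) := by
          intro k
          rw [List.insertIdx_succ_cons, List.insertIdx_succ_cons, cellFun_cons_cons,
            ← List.insertIdx_succ_cons]
        simp only [e1, ← Finset.mul_sum]
        rw [List.insertIdx_succ_cons, List.insertIdx_zero, cellFun_cons_cons]
        ring
      rw [key, ih b c hnd]
      rw [cellFun_cons_cons a b B, cellFun_cons_cons c b B]
      have h1 : c - a ≠ 0 := sub_ne_zero.mpr hca
      have h2 : c - b ≠ 0 := sub_ne_zero.mpr hcb
      have h3 : b - a ≠ 0 := sub_ne_zero.mpr (Ne.symm hab)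
      have h4 : b - c ≠ 0 := sub_ne_zero.mpr (Ne.symm hcb)
      field_simp
      ring

/-- Shuffling with a single letter gives zero: for distinct `a, b, c`, the sum of the
cell function over the three shuffles of `(a,b)` with `(c)` telescopes to zero; more
generally, for any nonempty list `A` and a letter `c` (all entries distinct), the sum
of the cell function over all insertions of `c` into `A` vanishes. -/
theorem shuffle_single_letter_vanishes {K : Type*} [Field K] :
    (∀ a b c : K, a ≠ b → b ≠ c → a ≠ c →
      cellFun [a, b, c] + cellFun [a, c, b] + cellFun [c, a, b] = 0) ∧
    (∀ (A : List K) (c : K), A ≠ [] → (c :: A).Nodup →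
      ∑ k ∈ Finset.range (A.length + 1), cellFun (A.insertIdx k c) = 0) := by
  have general : ∀ (A : List K) (c : K), A ≠ [] → (c :: A).Nodup →
      ∑ k ∈ Finset.range (A.length + 1), cellFun (A.insertIdx k c) = 0 := by
    intro A c hA hnd
    obtain ⟨a, B, rfl⟩ : ∃ a B, A = a :: B := by
      cases A with
      | nil => exact absurd rfl hA
      | cons a B => exact ⟨a, B, rfl⟩
    rw [Finset.sum_range_succ' (fun k => cellFun ((a :: B).insertIdx k c))]
    simp only [List.length_cons]
    rw [shuffle_tail_sum B a c hnd]
    have hca : c ≠ a := by simp at hnd; tauto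
    have h1 : c - a ≠ 0 := sub_ne_zero.mpr hca
    rw [List.insertIdx_zero, cellFun_cons_cons]
    have : a - c = -(c - a) := by ring
    rw [this, inv_neg, neg_mul]
    ring
  refine ⟨fun a b c hab hbc hac => ?_, general⟩
  have := general [a, b] c (by simp) (by simp [hab, Ne.symm hbc, Ne.symm hac])
  simpa [Finset.sum_range_succ, List.insertIdx_succ_cons, List.insertIdx_zero,
    add_comm, add_left_comm, add_assoc] using this
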